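/- For r ∈ (0,1) define A₃(a,r) = −((−r − log(1−r))/(r(1+a)²))·(−(1/r)log(1−r) + (1/r)log(1+ar)) for a ∈ [0,1]. Then for each fixed r ∈ (0,1) the function a ↦ A₃(a,r) is monotonically increasing on [0,1], and consequently A₃(a,r) ≥ A₃(0,r) = (−r − log(1−r))·log(1−r)/r² for all a ∈ [0,1]. -/

import Mathlib

open Set

theorem stmt10 (r : ℝ) (hr : r ∈ Ioo (0:ℝ) 1)
    (A₃ : ℝ → ℝ → ℝ)
    (hA₃ : ∀ a, A₃ a r = -((-r - Real.log (1 - r)) / (r * (1 + a) ^ 2)) *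
        (-(1/r) * Real.log (1 - r) + (1/r) * Real.log (1 + a * r))) :
    MonotoneOn (fun a => A₃ a r) (Icc 0 1) ∧
    A₃ 0 r = (-r - Real.log (1 - r)) * Real.log (1 - r) / r ^ 2 ∧
    ∀ a ∈ Icc (0:ℝ) 1, (-r - Real.log (1 - r)) * Real.log (1 - r) / r ^ 2 ≤ A₃ a r := by
  obtain ⟨hr0, hr1⟩ := hr
  have hrne : r ≠ 0 := ne_of_gt hr0
  set L : ℝ := Real.log (1 - r) with hLdef
  have h1r : (0:ℝ) < 1 - r := by linarith
  have hL : L ≤ -r := by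
    have := Real.log_le_sub_one_of_pos h1r
    linarith
  have hC : 0 ≤ -r - L := by linarith
  set h : ℝ → ℝ := fun a => (L - Real.log (1 + a * r)) / (1 + a) ^ 2 with hhdef
  -- derivative facts
  have hderiv : ∀ a : ℝ, -1 < a → HasDerivAt h
      ((-(r / (1 + a * r)) * (1 + a) ^ 2 - (L - Real.log (1 + a * r)) * (2 * (1 + a) ^ 1 * 1)) /
        ((1 + a) ^ 2) ^ 2) a := by
    intro a ha
    have h1a : (0:ℝ) < 1 + a := by linarith
    have h1ar : (0:ℝ) < 1 + a * r := by nlinarith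
    have hu : HasDerivAt (fun a : ℝ => L - Real.log (1 + a * r)) (-(r / (1 + a * r))) a := by
      have hlin : HasDerivAt (fun a : ℝ => 1 + a * r) r a := by
        simpa using ((hasDerivAt_id a).mul_const r).const_add 1
      have := (Real.hasDerivAt_log (ne_of_gt h1ar)).comp a hlin
      have h2 := this.const_sub L
      exact h2.congr_deriv (by ring)
    have hv : HasDerivAt (fun a : ℝ => (1 + a) ^ 2) (2 * (1 + a) ^ 1 * 1) a := by
      simpa using ((hasDerivAt_id a).const_add 1).fun_pow 2
    exact hu.div hv (by positivity)
  have hmono_h : MonotoneOn h (Icc 0 1) := by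
    apply monotoneOn_of_deriv_nonneg (convex_Icc 0 1)
    · intro a ha
      exact ((hderiv a (by linarith [ha.1])).continuousAt).continuousWithinAt
    · intro a ha
      rw [interior_Icc] at ha
      exact ((hderiv a (by linarith [ha.1])).differentiableAt).differentiableWithinAt
    · intro a ha
      rw [interior_Icc] at ha
      obtain ⟨ha0, ha1⟩ := ha
      rw [(hderiv a (by linarith)).deriv]
      have h1a : (0:ℝ) < 1 + a := by linarith
      have h1ar : (0:ℝ) < 1 + a * r := by nlinarith
      have hlogar : 0 ≤ Real.log (1 + a * r) := Real.log_nonneg (by nlinarith)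
      apply div_nonneg _ (by positivity)
      have key1 : r * (1 + a) ≤ 2 * r * (1 + a * r) := by
        nlinarith [mul_nonneg hr0.le (by linarith : (0:ℝ) ≤ 1 - a), mul_nonneg (mul_nonneg ha0.le hr0.le) hr0.le]
      have key2 : r / (1 + a * r) * (1 + a) ≤ 2 * r := by
        rw [div_mul_eq_mul_div, div_le_iff₀ h1ar]
        nlinarith
      have key3 : 2 * r ≤ 2 * (Real.log (1 + a * r) - L) := by linarith
      have : r / (1 + a * r) * (1 + a) ≤ 2 * (Real.log (1 + a * r) - L) := le_trans key2 key3
      have hexp : -(r / (1 + a * r)) * (1 + a) ^ 2 - (L - Real.log (1 + a * r)) * (2 * (1 + a) ^ 1 * 1)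
          = (1 + a) * (2 * (Real.log (1 + a * r) - L) - r / (1 + a * r) * (1 + a)) := by ring
      rw [hexp]
      apply mul_nonneg (le_of_lt h1a)
      linarith
  -- equality of A₃ with scaled h on Icc
  have heq : ∀ a ∈ Icc (0:ℝ) 1, A₃ a r = ((-r - L) / r ^ 2) * h a := by
    intro a ha
    have h1a : (0:ℝ) < 1 + a := by linarith [ha.1]
    rw [hA₃ a, hhdef]
    field_simp
    ring
  have hmono : MonotoneOn (fun a => A₃ a r) (Icc 0 1) := by
    intro a ha b hb hab
    simp only
    rw [heq a ha, heq b hb]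
    apply mul_le_mul_of_nonneg_left (hmono_h ha hb hab) (by positivity)
  have hval : A₃ 0 r = (-r - L) * L / r ^ 2 := by
    rw [hA₃ 0]
    simp only [zero_mul, add_zero, Real.log_one, mul_zero]
    field_simp
  refine ⟨hmono, hval, ?_⟩
  intro a ha
  have h0 : (0:ℝ) ∈ Icc (0:ℝ) 1 := ⟨le_refl 0, zero_le_one⟩
  have := hmono h0 ha ha.1
  simp only at this
  calc (-r - L) * L / r ^ 2 = A₃ 0 r := hval.symm
    _ ≤ A₃ a r := this
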